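/- Let $n \ge 1$, let $A$ be an $n\times n$ Hermitian matrix over $\mathbb{C}$, let $W$ be an $n\times n$ positive definite Hermitian matrix, let $v \in \mathbb{C}^n$ and $c \ge 0$, and set $W_0 = W + c\,vv^*$. Then for every $j$ with $1 \le j \le n-1$ one has $\gamma_j(A;W_0) \le \gamma_{j+1}(A;W)$; i.e., passing from the metric $W$ to the rank-one enlargement $W_0$ pushes each relative eigenvalue below the next eigenvalue for the original metric. -/

import Mathlib

open Matrix
open scoped ComplexOrder

/-- The Rayleigh quotient `u*Au / u*Wu` of a pair of matrices at a vector `u`. -/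
noncomputable def rayleigh {n : ℕ} (A W : Matrix (Fin n) (Fin n) ℂ) (u : Fin n → ℂ) : ℝ :=
  ((star u) ⬝ᵥ (A *ᵥ u)).re / ((star u) ⬝ᵥ (W *ᵥ u)).re

/-- The `j`-th eigenvalue (in increasing order, `1 ≤ j ≤ n`) of the Hermitian matrix `A`
relative to the positive definite Hermitian matrix `W`, via the Courant–Fischer formula
`γ_j(A;W) = min_{dim F = j} max_{u ∈ F \ {0}} (u*Au)/(u*Wu)`. -/
noncomputable def relEig {n : ℕ} (A W : Matrix (Fin n) (Fin n) ℂ) (j : ℕ) : ℝ :=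
  sInf { r : ℝ | ∃ F : Submodule ℂ (Fin n → ℂ), Module.finrank ℂ F = j ∧
      r = sSup { s : ℝ | ∃ u : Fin n → ℂ, u ∈ F ∧ u ≠ 0 ∧ s = rayleigh A W u } }

/-!
Cut a `(j+1)`-dimensional subspace `F` with the hyperplane `v^⊥`: what remains has dimension at
least `j`, and on it the Rayleigh quotients for `W` and `W + c vv*` coincide. So some
`j`-dimensional competitor for `γ_j(A; W₀)` has its maximum below the maximum over `F`.
The rest is junk-value bookkeeping: the `sSup`/`sInf` in `relEig` range over bounded nonempty
sets, because a Rayleigh quotient with positive definite denominator is scale invariant and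
continuous on the unit sphere, hence bounded.
-/

namespace Submodule

variable {K M : Type*} [Field K] [AddCommGroup M] [Module K M]

theorem exists_le_finrank_eq (V : Submodule K M) {k : ℕ} (hk : k ≤ Module.finrank K V) :
    ∃ G ≤ V, Module.finrank K G = k := by
  obtain ⟨f, hf⟩ := exists_linearIndependent_of_le_finrank hk
  refine ⟨span K (Set.range (V.subtype ∘ f)), ?_, ?_⟩
  · rw [span_le]
    rintro _ ⟨i, rfl⟩
    exact (f i).2
  · rw [finrank_span_eq_card (hf.map' V.subtype V.ker_subtype), Fintype.card_fin]

theorem exists_le_le_ker_finrank_eq (f : M →ₗ[K] K) (F : Submodule K M) {k : ℕ}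
    (hF : Module.finrank K F = k + 1) :
    ∃ G ≤ F, G ≤ LinearMap.ker f ∧ Module.finrank K G = k := by
  have : FiniteDimensional K F := Module.finite_of_finrank_pos (hF ▸ k.succ_pos)
  have hk : k ≤ Module.finrank K ↥(F ⊓ LinearMap.ker f) := by
    have hsum := (f.comp F.subtype).finrank_range_add_finrank_ker
    have hrange : Module.finrank K (LinearMap.range (f.comp F.subtype)) ≤ 1 :=
      (finrank_le _).trans (Module.finrank_self K).le
    rw [LinearMap.ker_comp, ← finrank_map_subtype_eq, map_comap_subtype] at hsum
    omega
  obtain ⟨G, hG, hGk⟩ := exists_le_finrank_eq _ hk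
  exact ⟨G, hG.trans inf_le_left, hG.trans inf_le_right, hGk⟩

end Submodule

section Rayleigh

variable {n : ℕ} {A W : Matrix (Fin n) (Fin n) ℂ}

theorem rayleigh_real_smul (A W : Matrix (Fin n) (Fin n) ℂ) (u : Fin n → ℂ) {t : ℝ}
    (ht : t ≠ 0) : rayleigh A W ((t : ℂ) • u) = rayleigh A W u := by
  simp only [rayleigh, star_smul, mulVec_smul, smul_dotProduct, dotProduct_smul,
    Complex.star_def, Complex.conj_ofReal, smul_eq_mul, ← mul_assoc, ← Complex.ofReal_mul,
    Complex.re_ofReal_mul]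
  exact mul_div_mul_left _ _ (mul_ne_zero ht ht)

theorem Matrix.PosDef.exists_abs_rayleigh_le (hW : W.PosDef) (A : Matrix (Fin n) (Fin n) ℂ) :
    ∃ B, ∀ u ≠ 0, |rayleigh A W u| ≤ B := by
  have hcont : ContinuousOn (rayleigh A W) (Metric.sphere 0 1) := by
    refine ContinuousOn.div (by unfold dotProduct mulVec; fun_prop)
      (by unfold dotProduct mulVec; fun_prop) fun u hu => ?_
    exact (hW.re_dotProduct_pos (ne_zero_of_mem_unit_sphere ⟨u, hu⟩)).ne'
  obtain ⟨B, hB⟩ := (isCompact_sphere (0 : Fin n → ℂ) 1).exists_bound_of_continuousOn hcont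
  refine ⟨B, fun u hu => ?_⟩
  have hnorm : ‖u‖ ≠ 0 := norm_ne_zero_iff.mpr hu
  have hunit := hB (((‖u‖⁻¹ : ℝ) : ℂ) • u) (by simp [norm_smul, hnorm])
  rwa [rayleigh_real_smul _ _ _ (inv_ne_zero hnorm), Real.norm_eq_abs] at hunit

theorem rayleigh_add_rankOne_of_dotProduct_eq_zero (A W : Matrix (Fin n) (Fin n) ℂ)
    (v : Fin n → ℂ) (c : ℝ) {u : Fin n → ℂ} (hu : star v ⬝ᵥ u = 0) :
    rayleigh A (W + c • vecMulVec v (star v)) u = rayleigh A W u := by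
  simp [rayleigh, add_mulVec, smul_mulVec, vecMulVec_mulVec, hu]

def rayleighSet (A W : Matrix (Fin n) (Fin n) ℂ) (F : Submodule ℂ (Fin n → ℂ)) : Set ℝ :=
  {s | ∃ u : Fin n → ℂ, u ∈ F ∧ u ≠ 0 ∧ s = rayleigh A W u}

theorem relEig_eq_sInf (A W : Matrix (Fin n) (Fin n) ℂ) (j : ℕ) :
    relEig A W j =
      sInf {r | ∃ F : Submodule ℂ (Fin n → ℂ), Module.finrank ℂ F = j ∧
        r = sSup (rayleighSet A W F)} :=
  rfl

theorem rayleighSet_nonempty {F : Submodule ℂ (Fin n → ℂ)} (hF : 0 < Module.finrank ℂ F) :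
    (rayleighSet A W F).Nonempty := by
  have : Nontrivial F := Module.nontrivial_of_finrank_pos hF
  obtain ⟨u, hu⟩ := exists_ne (0 : F)
  exact ⟨_, u, u.2, by simpa using hu, rfl⟩

variable {B : ℝ}

theorem bddAbove_rayleighSet (hB : ∀ u ≠ 0, |rayleigh A W u| ≤ B)
    (F : Submodule ℂ (Fin n → ℂ)) : BddAbove (rayleighSet A W F) :=
  ⟨B, by rintro _ ⟨u, -, hu, rfl⟩; exact le_of_abs_le (hB u hu)⟩

theorem neg_le_sSup_rayleighSet (hB : ∀ u ≠ 0, |rayleigh A W u| ≤ B)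
    {F : Submodule ℂ (Fin n → ℂ)} (hF : 0 < Module.finrank ℂ F) :
    -B ≤ sSup (rayleighSet A W F) := by
  obtain ⟨_, u, huF, hu, rfl⟩ := rayleighSet_nonempty (A := A) (W := W) hF
  exact (neg_le_of_abs_le (hB u hu)).trans
    (le_csSup (bddAbove_rayleighSet hB F) ⟨u, huF, hu, rfl⟩)

theorem relEig_le_sSup_rayleighSet (hB : ∀ u ≠ 0, |rayleigh A W u| ≤ B)
    {G : Submodule ℂ (Fin n → ℂ)} (hG : 0 < Module.finrank ℂ G) :
    relEig A W (Module.finrank ℂ G) ≤ sSup (rayleighSet A W G) := by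
  rw [relEig_eq_sInf]
  refine csInf_le ⟨-B, ?_⟩ ⟨G, rfl, rfl⟩
  rintro _ ⟨F, hF, rfl⟩
  exact neg_le_sSup_rayleighSet hB (hF ▸ hG)

theorem le_relEig_of_forall {j : ℕ} {x : ℝ} (hj : j ≤ n)
    (h : ∀ F : Submodule ℂ (Fin n → ℂ), Module.finrank ℂ F = j → x ≤ sSup (rayleighSet A W F)) :
    x ≤ relEig A W j := by
  obtain ⟨F, -, hF⟩ := (⊤ : Submodule ℂ (Fin n → ℂ)).exists_le_finrank_eq (k := j) (by simpa)
  rw [relEig_eq_sInf]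
  refine le_csInf ⟨_, F, hF, rfl⟩ ?_
  rintro _ ⟨F, hF, rfl⟩
  exact h F hF

theorem rayleighSet_add_rankOne_subset (A W : Matrix (Fin n) (Fin n) ℂ) (v : Fin n → ℂ)
    (c : ℝ) {F G : Submodule ℂ (Fin n → ℂ)} (hGF : G ≤ F)
    (hGv : G ≤ LinearMap.ker (dotProductBilin ℂ ℂ (star v))) :
    rayleighSet A (W + c • vecMulVec v (star v)) G ⊆ rayleighSet A W F := by
  rintro _ ⟨u, huG, hu, rfl⟩
  exact ⟨u, hGF huG, hu, rayleigh_add_rankOne_of_dotProduct_eq_zero A W v c (hGv huG)⟩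

end Rayleigh

theorem rank_one_enlargement_pushes_down_general {n : ℕ}
    (A W : Matrix (Fin n) (Fin n) ℂ) (hW : W.PosDef)
    (v : Fin n → ℂ) (c : ℝ) (hc : 0 ≤ c)
    (W₀ : Matrix (Fin n) (Fin n) ℂ) (hW₀ : W₀ = W + c • vecMulVec v (star v)) :
    ∀ j : ℕ, 1 ≤ j → j ≤ n - 1 → relEig A W₀ j ≤ relEig A W (j + 1) := by
  intro j hj hjn
  subst hW₀
  have hW₀ := hW.add_posSemidef ((posSemidef_vecMulVec_self_star v).smul hc)
  obtain ⟨B₀, hB₀⟩ := hW₀.exists_abs_rayleigh_le A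
  obtain ⟨B, hB⟩ := hW.exists_abs_rayleigh_le A
  refine le_relEig_of_forall (by omega) fun F hF => ?_
  obtain ⟨G, hGF, hGv, hG⟩ := F.exists_le_le_ker_finrank_eq (dotProductBilin ℂ ℂ (star v)) hF
  calc relEig A (W + c • vecMulVec v (star v)) j
      ≤ sSup (rayleighSet A (W + c • vecMulVec v (star v)) G) :=
        hG ▸ relEig_le_sSup_rayleighSet hB₀ (by omega)
    _ ≤ sSup (rayleighSet A W F) :=
        csSup_le_csSup (bddAbove_rayleighSet hB F) (rayleighSet_nonempty (by omega))
          (rayleighSet_add_rankOne_subset A W v c hGF hGv)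

theorem rank_one_enlargement_pushes_down {n : ℕ} (hn : 1 ≤ n)
    (A W : Matrix (Fin n) (Fin n) ℂ) (hA : A.IsHermitian) (hW : W.PosDef)
    (v : Fin n → ℂ) (c : ℝ) (hc : 0 ≤ c)
    (W₀ : Matrix (Fin n) (Fin n) ℂ) (hW₀ : W₀ = W + c • vecMulVec v (star v)) :
    ∀ j : ℕ, 1 ≤ j → j ≤ n - 1 → relEig A W₀ j ≤ relEig A W (j + 1) :=
  rank_one_enlargement_pushes_down_general A W hW v c hc W₀ hW₀
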